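/- Let A, Y, S be binary, and Z, U finite-valued random variables on a discrete probability space, all conditioning events having positive probability. Assume: (i) Z ⊥ (Y, S) | (A, U); (ii) P(S=1 | A=a, Y=1, U=u)/P(S=1 | A=a, Y=0, U=u) = exp(h(u)) for both a (selection ratio free of a); (iii) the conditional odds ratio of Y on A given U equals exp(β₀′) for all u; (iv) q̃ satisfies E[q̃(a, Z) | A=a, U=u] = 1/P(A=a | U=u, Y=0, S=1) for all a, u. Then for all u: E[(-1)^{1-A} · q̃(A, Z) · Y · exp(−β₀′·A) | U=u, S=1] = 0. -/

import Mathlib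

open scoped BigOperators
open Real

attribute [local instance] Classical.propDecidable

noncomputable section

variable {Ω : Type*}

/-- Probability of an event under weight function `P` on a finite sample space. -/
def pr [Fintype Ω] (P : Ω → ℝ) (E : Ω → Prop) : ℝ :=
  ∑ ω, if E ω then P ω else 0

/-- Conditional probability `P(E | F)`. -/
def cpr [Fintype Ω] (P : Ω → ℝ) (E F : Ω → Prop) : ℝ :=
  pr P (fun ω => E ω ∧ F ω) / pr P F

/-- Conditional expectation `E[f | F]`. -/
def cexp [Fintype Ω] (P : Ω → ℝ) (f : Ω → ℝ) (F : Ω → Prop) : ℝ :=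
  (∑ ω, if F ω then f ω * P ω else 0) / pr P F

/-- Conditional independence `f ⊥ g | h` under `P`. -/
def CondIndep [Fintype Ω] (P : Ω → ℝ) {α β γ : Type*}
    (f : Ω → α) (g : Ω → β) (h : Ω → γ) : Prop :=
  ∀ a b c, pr P (fun ω => h ω = c) ≠ 0 →
    cpr P (fun ω => f ω = a ∧ g ω = b) (fun ω => h ω = c) =
      cpr P (fun ω => f ω = a) (fun ω => h ω = c) *
        cpr P (fun ω => g ω = b) (fun ω => h ω = c)

/-!
Fix a stratum `u`. By (i), integrating `q̃(a, Z)` over the selected cases `{A = a, Y = 1, S = 1}`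
gives `E[q̃(a, Z) | A = a, U = u]` times their probability, which by (iv) equals
`P(U = u, Y = 0, S = 1)` times the ratio of selected cases to selected controls in arm `a`.
Factoring `P(S = 1 | A, Y, U)` out of both, (ii) turns that ratio into `exp (h u)` times the odds
of infection in arm `a`. The estimating function is therefore a common factor times
`exp (-β₀') · odds₁ - odds₀`, which vanishes by (iii).
-/

section Events

variable [Fintype Ω] (P : Ω → ℝ)

theorem pr_congr {E F : Ω → Prop} (h : ∀ ω, E ω ↔ F ω) : pr P E = pr P F :=
  Finset.sum_congr rfl fun ω _ => by simp only [h ω]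

theorem pr_and_ne_zero_of_cpr_ne_zero {E F : Ω → Prop} (h : cpr P E F ≠ 0) :
    pr P (fun ω => E ω ∧ F ω) ≠ 0 ∧ pr P F ≠ 0 :=
  div_ne_zero_iff.mp h

theorem pr_and_eq_cpr_mul {E F : Ω → Prop} (hF : pr P F ≠ 0) :
    pr P (fun ω => E ω ∧ F ω) = cpr P E F * pr P F :=
  (div_mul_cancel₀ _ hF).symm

theorem sum_ite_comp_mul_eq_sum_pr {𝒵 : Type*} [Fintype 𝒵] (Z : Ω → 𝒵) (g : 𝒵 → ℝ)
    (F : Ω → Prop) [DecidablePred F] :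
    (∑ ω, if F ω then g (Z ω) * P ω else 0) = ∑ z, g z * pr P (fun ω => Z ω = z ∧ F ω) := by
  simp only [pr, Finset.mul_sum, mul_ite, mul_zero]
  rw [Finset.sum_comm]
  refine Finset.sum_congr rfl fun ω _ => ?_
  by_cases hF : F ω <;> simp [hF]

theorem sum_ite_comp_mul_of_condIndep {𝒵 β γ : Type*} [Fintype 𝒵] {Z : Ω → 𝒵} {V : Ω → β}
    {W : Ω → γ} (hZ : CondIndep P Z V W) (g : 𝒵 → ℝ) (b : β) {c : γ}
    (hc : pr P (fun ω => W ω = c) ≠ 0) :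
    (∑ ω, if V ω = b ∧ W ω = c then g (Z ω) * P ω else 0) =
      cexp P (fun ω => g (Z ω)) (fun ω => W ω = c) * pr P (fun ω => V ω = b ∧ W ω = c) := by
  rw [cexp, sum_ite_comp_mul_eq_sum_pr, sum_ite_comp_mul_eq_sum_pr, Finset.sum_div,
    Finset.sum_mul]
  refine Finset.sum_congr rfl fun z _ => ?_
  have hz := hZ z b c hc
  simp only [cpr, and_assoc] at hz
  field_simp at hz ⊢
  rw [hz]

end Events

theorem estimating_term_eq_sub {a y : ℕ} (ha : a = 0 ∨ a = 1) (hy : y = 0 ∨ y = 1) (q : ℕ → ℝ)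
    (β : ℝ) :
    (-1 : ℝ) ^ (1 - a) * q a * (y : ℝ) * exp (-β * a) =
      exp (-β) * (if y = 1 ∧ a = 1 then q 1 else 0) - (if y = 1 ∧ a = 0 then q 0 else 0) := by
  rcases ha with rfl | rfl <;> rcases hy with rfl | rfl <;> simp [mul_comm]

section TestNegativeDesign

variable [Fintype Ω] {𝒵 𝒰 : Type*} (P : Ω → ℝ) (A Y S : Ω → ℕ) (Z : Ω → 𝒵)
  (U : Ω → 𝒰)

theorem pr_selected_eq_cpr_mul_cpr_mul (a y : ℕ) (u : 𝒰)
    (hY : cpr P (fun ω => Y ω = y) (fun ω => A ω = a ∧ U ω = u) ≠ 0) :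
    pr P (fun ω => S ω = 1 ∧ A ω = a ∧ Y ω = y ∧ U ω = u) =
      cpr P (fun ω => S ω = 1) (fun ω => A ω = a ∧ Y ω = y ∧ U ω = u) *
        cpr P (fun ω => Y ω = y) (fun ω => A ω = a ∧ U ω = u) *
          pr P (fun ω => A ω = a ∧ U ω = u) := by
  obtain ⟨hAYU, hAU⟩ := pr_and_ne_zero_of_cpr_ne_zero P hY
  have hshuffle : pr P (fun ω => A ω = a ∧ Y ω = y ∧ U ω = u) =
      pr P (fun ω => Y ω = y ∧ A ω = a ∧ U ω = u) :=
    pr_congr P fun ω => by tauto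
  rw [pr_and_eq_cpr_mul P (hshuffle ▸ hAYU), hshuffle, pr_and_eq_cpr_mul P hAU, mul_assoc]

theorem sum_bridge_selected_cases_eq [Fintype 𝒵]
    (hZ : CondIndep P Z (fun ω => (Y ω, S ω)) (fun ω => (A ω, U ω)))
    (q : 𝒵 → ℝ) (a : ℕ) (u : 𝒰) (r : ℝ)
    (hA : cpr P (fun ω => A ω = a) (fun ω => U ω = u ∧ Y ω = 0 ∧ S ω = 1) ≠ 0)
    (hY0 : cpr P (fun ω => Y ω = 0) (fun ω => A ω = a ∧ U ω = u) ≠ 0)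
    (hY1 : cpr P (fun ω => Y ω = 1) (fun ω => A ω = a ∧ U ω = u) ≠ 0)
    (hsel : cpr P (fun ω => S ω = 1) (fun ω => A ω = a ∧ Y ω = 1 ∧ U ω = u) /
        cpr P (fun ω => S ω = 1) (fun ω => A ω = a ∧ Y ω = 0 ∧ U ω = u) = r)
    (hq : cexp P (fun ω => q (Z ω)) (fun ω => A ω = a ∧ U ω = u) =
        (cpr P (fun ω => A ω = a) (fun ω => U ω = u ∧ Y ω = 0 ∧ S ω = 1))⁻¹) :
    (∑ ω, if (Y ω = 1 ∧ S ω = 1) ∧ A ω = a ∧ U ω = u then q (Z ω) * P ω else 0) =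
      r * pr P (fun ω => U ω = u ∧ Y ω = 0 ∧ S ω = 1) *
        (cpr P (fun ω => Y ω = 1) (fun ω => A ω = a ∧ U ω = u) /
          cpr P (fun ω => Y ω = 0) (fun ω => A ω = a ∧ U ω = u)) := by
  obtain ⟨hcontrols, hD⟩ := pr_and_ne_zero_of_cpr_ne_zero P hA
  have hAU := (pr_and_ne_zero_of_cpr_ne_zero P hY0).2
  have hcases := sum_ite_comp_mul_of_condIndep P hZ q (1, 1) (c := (a, u))
    (by simpa only [Prod.mk.injEq] using hAU)
  simp only [Prod.mk.injEq] at hcases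
  have hcases_eq : pr P (fun ω => (Y ω = 1 ∧ S ω = 1) ∧ A ω = a ∧ U ω = u) =
      pr P (fun ω => S ω = 1 ∧ A ω = a ∧ Y ω = 1 ∧ U ω = u) :=
    pr_congr P fun ω => by tauto
  have hcontrols_eq : pr P (fun ω => A ω = a ∧ U ω = u ∧ Y ω = 0 ∧ S ω = 1) =
      pr P (fun ω => S ω = 1 ∧ A ω = a ∧ Y ω = 0 ∧ U ω = u) :=
    pr_congr P fun ω => by tauto
  rw [hcontrols_eq, pr_selected_eq_cpr_mul_cpr_mul P A Y S U a 0 u hY0] at hcontrols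
  have hsel0 := left_ne_zero_of_mul (left_ne_zero_of_mul hcontrols)
  rw [hcases, hq, cpr, hcontrols_eq, hcases_eq, pr_selected_eq_cpr_mul_cpr_mul P A Y S U a 0 u hY0,
    pr_selected_eq_cpr_mul_cpr_mul P A Y S U a 1 u hY1, ← hsel]
  field_simp

theorem sum_estimating_function_eq_sub (hA : ∀ ω, A ω = 0 ∨ A ω = 1) (hY : ∀ ω, Y ω = 0 ∨ Y ω = 1)
    (qt : ℕ → 𝒵 → ℝ) (β : ℝ) (u : 𝒰) :
    (∑ ω, if U ω = u ∧ S ω = 1 then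
        (-1 : ℝ) ^ (1 - A ω) * qt (A ω) (Z ω) * (Y ω : ℝ) * exp (-β * A ω) * P ω else 0) =
      exp (-β) * (∑ ω, if (Y ω = 1 ∧ S ω = 1) ∧ A ω = 1 ∧ U ω = u then qt 1 (Z ω) * P ω else 0) -
        ∑ ω, if (Y ω = 1 ∧ S ω = 1) ∧ A ω = 0 ∧ U ω = u then qt 0 (Z ω) * P ω else 0 := by
  rw [Finset.mul_sum, ← Finset.sum_sub_distrib]
  refine Finset.sum_congr rfl fun ω _ => ?_
  rw [estimating_term_eq_sub (hA ω) (hY ω) (fun a => qt a (Z ω))]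
  by_cases hU : U ω = u <;> by_cases hS : S ω = 1 <;> simp [hU, hS, ite_and]
  split_ifs <;> ring

end TestNegativeDesign

theorem stmt14_general [Fintype Ω] {𝒵 𝒰 : Type*} [Fintype 𝒵]
    (P : Ω → ℝ)
    (A Y S : Ω → ℕ) (Z : Ω → 𝒵) (U : Ω → 𝒰)
    (hA : ∀ ω, A ω = 0 ∨ A ω = 1) (hY : ∀ ω, Y ω = 0 ∨ Y ω = 1)
    (hpos : ∀ (a y : ℕ) (u : 𝒰), (a = 0 ∨ a = 1) → (y = 0 ∨ y = 1) →
      pr P (fun ω => A ω = a ∧ Y ω = y ∧ U ω = u) ≠ 0 ∧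
      pr P (fun ω => U ω = u ∧ Y ω = 0 ∧ S ω = 1) ≠ 0 ∧
      cpr P (fun ω => A ω = a) (fun ω => U ω = u ∧ Y ω = 0 ∧ S ω = 1) ≠ 0 ∧
      cpr P (fun ω => Y ω = y) (fun ω => A ω = a ∧ U ω = u) ≠ 0 ∧
      cpr P (fun ω => S ω = 1) (fun ω => A ω = a ∧ Y ω = y ∧ U ω = u) ≠ 0)
    -- (i) Z ⊥ (Y, S) | (A, U)
    (hZ : CondIndep P Z (fun ω => (Y ω, S ω)) (fun ω => (A ω, U ω)))
    -- (ii) selection ratio free of treatment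
    (h : 𝒰 → ℝ)
    (hsel : ∀ (a : ℕ) (u : 𝒰), (a = 0 ∨ a = 1) →
      cpr P (fun ω => S ω = 1) (fun ω => A ω = a ∧ Y ω = 1 ∧ U ω = u) /
        cpr P (fun ω => S ω = 1) (fun ω => A ω = a ∧ Y ω = 0 ∧ U ω = u) =
          Real.exp (h u))
    -- (iii) homogeneous odds ratio
    (β₀' : ℝ)
    (hOR : ∀ u : 𝒰,
      cpr P (fun ω => Y ω = 1) (fun ω => A ω = 1 ∧ U ω = u) *
          cpr P (fun ω => Y ω = 0) (fun ω => A ω = 0 ∧ U ω = u) /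
        (cpr P (fun ω => Y ω = 1) (fun ω => A ω = 0 ∧ U ω = u) *
          cpr P (fun ω => Y ω = 0) (fun ω => A ω = 1 ∧ U ω = u)) =
            Real.exp β₀')
    -- (iv) alternative treatment confounding bridge function
    (qt : ℕ → 𝒵 → ℝ)
    (hqt : ∀ (a : ℕ) (u : 𝒰), (a = 0 ∨ a = 1) →
      cexp P (fun ω => qt a (Z ω)) (fun ω => A ω = a ∧ U ω = u) =
        (cpr P (fun ω => A ω = a) (fun ω => U ω = u ∧ Y ω = 0 ∧ S ω = 1))⁻¹) :
    ∀ u : 𝒰, pr P (fun ω => U ω = u ∧ S ω = 1) ≠ 0 →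
      cexp P (fun ω => (-1 : ℝ) ^ (1 - A ω) * qt (A ω) (Z ω) *
          (Y ω : ℝ) * Real.exp (-β₀' * (A ω : ℝ)))
        (fun ω => U ω = u ∧ S ω = 1) = 0 := by
  intro u _
  have arm : ∀ a, a = 0 ∨ a = 1 →
      (∑ ω, if (Y ω = 1 ∧ S ω = 1) ∧ A ω = a ∧ U ω = u then qt a (Z ω) * P ω else 0) =
        exp (h u) * pr P (fun ω => U ω = u ∧ Y ω = 0 ∧ S ω = 1) *
          (cpr P (fun ω => Y ω = 1) (fun ω => A ω = a ∧ U ω = u) /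
            cpr P (fun ω => Y ω = 0) (fun ω => A ω = a ∧ U ω = u)) := fun a ha =>
    sum_bridge_selected_cases_eq P A Y S Z U hZ (qt a) a u (exp (h u))
      (hpos a 0 u ha (.inl rfl)).2.2.1 (hpos a 0 u ha (.inl rfl)).2.2.2.1
      (hpos a 1 u ha (.inr rfl)).2.2.2.1 (hsel a u ha) (hqt a u ha)
  have hodds : cpr P (fun ω => Y ω = 1) (fun ω => A ω = 1 ∧ U ω = u) /
        cpr P (fun ω => Y ω = 0) (fun ω => A ω = 1 ∧ U ω = u) =
      exp β₀' * (cpr P (fun ω => Y ω = 1) (fun ω => A ω = 0 ∧ U ω = u) /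
        cpr P (fun ω => Y ω = 0) (fun ω => A ω = 0 ∧ U ω = u)) := by
    rw [← hOR u]
    field_simp [(hpos 0 0 u (.inl rfl) (.inl rfl)).2.2.2.1,
      (hpos 0 1 u (.inl rfl) (.inr rfl)).2.2.2.1]
  have hsum := sum_estimating_function_eq_sub P A Y S Z U hA hY qt β₀' u
  rw [arm 1 (.inr rfl), arm 0 (.inl rfl), hodds, mul_left_comm _ (exp β₀'), exp_neg,
    inv_mul_cancel_left₀ (exp_ne_zero _), sub_self] at hsum
  rw [cexp, div_eq_zero_iff]
  exact Or.inl (by convert hsum)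

/-- Theorem 1': the negative-control estimating function is
conditionally unbiased for the log causal odds ratio β₀' even under
treatment-induced selection. -/
theorem stmt14 [Fintype Ω] {𝒵 𝒰 : Type*} [Fintype 𝒵] [Fintype 𝒰]
    (P : Ω → ℝ) (hP : ∀ ω, 0 ≤ P ω) (hPsum : ∑ ω, P ω = 1)
    (A Y S : Ω → ℕ) (Z : Ω → 𝒵) (U : Ω → 𝒰)
    (hA : ∀ ω, A ω = 0 ∨ A ω = 1) (hY : ∀ ω, Y ω = 0 ∨ Y ω = 1)
    (hS : ∀ ω, S ω = 0 ∨ S ω = 1)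
    (hpos : ∀ (a y : ℕ) (u : 𝒰), (a = 0 ∨ a = 1) → (y = 0 ∨ y = 1) →
      pr P (fun ω => A ω = a ∧ Y ω = y ∧ U ω = u) ≠ 0 ∧
      pr P (fun ω => U ω = u ∧ Y ω = 0 ∧ S ω = 1) ≠ 0 ∧
      cpr P (fun ω => A ω = a) (fun ω => U ω = u ∧ Y ω = 0 ∧ S ω = 1) ≠ 0 ∧
      cpr P (fun ω => Y ω = y) (fun ω => A ω = a ∧ U ω = u) ≠ 0 ∧
      cpr P (fun ω => S ω = 1) (fun ω => A ω = a ∧ Y ω = y ∧ U ω = u) ≠ 0)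
    -- (i) Z ⊥ (Y, S) | (A, U)
    (hZ : CondIndep P Z (fun ω => (Y ω, S ω)) (fun ω => (A ω, U ω)))
    -- (ii) selection ratio free of treatment
    (h : 𝒰 → ℝ)
    (hsel : ∀ (a : ℕ) (u : 𝒰), (a = 0 ∨ a = 1) →
      cpr P (fun ω => S ω = 1) (fun ω => A ω = a ∧ Y ω = 1 ∧ U ω = u) /
        cpr P (fun ω => S ω = 1) (fun ω => A ω = a ∧ Y ω = 0 ∧ U ω = u) =
          Real.exp (h u))
    -- (iii) homogeneous odds ratio
    (β₀' : ℝ)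
    (hOR : ∀ u : 𝒰,
      cpr P (fun ω => Y ω = 1) (fun ω => A ω = 1 ∧ U ω = u) *
          cpr P (fun ω => Y ω = 0) (fun ω => A ω = 0 ∧ U ω = u) /
        (cpr P (fun ω => Y ω = 1) (fun ω => A ω = 0 ∧ U ω = u) *
          cpr P (fun ω => Y ω = 0) (fun ω => A ω = 1 ∧ U ω = u)) =
            Real.exp β₀')
    -- (iv) alternative treatment confounding bridge function
    (qt : ℕ → 𝒵 → ℝ)
    (hqt : ∀ (a : ℕ) (u : 𝒰), (a = 0 ∨ a = 1) →
      cexp P (fun ω => qt a (Z ω)) (fun ω => A ω = a ∧ U ω = u) =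
        (cpr P (fun ω => A ω = a) (fun ω => U ω = u ∧ Y ω = 0 ∧ S ω = 1))⁻¹) :
    ∀ u : 𝒰, pr P (fun ω => U ω = u ∧ S ω = 1) ≠ 0 →
      cexp P (fun ω => (-1 : ℝ) ^ (1 - A ω) * qt (A ω) (Z ω) *
          (Y ω : ℝ) * Real.exp (-β₀' * (A ω : ℝ)))
        (fun ω => U ω = u ∧ S ω = 1) = 0 :=
  stmt14_general P A Y S Z U hA hY hpos hZ h hsel β₀' hOR qt hqt
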